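/- Let κ be a cardinal such that either κ is strongly inaccessible, or cf(κ) ≥ ω₁ and κ is a limit of strongly inaccessible cardinals. Let 1 ≤ d < ω and 1 ≤ σ < κ, and assume that the set of infinite cardinals α < κ with σ < α for which SDHL(d,σ,α) holds is a stationary subset of κ. Then SDHL(d,σ,κ) holds. -/

import Mathlib

/-!
Let `τ ζ` bound the sizes of the levels `ζ + 1` of the given trees `T i`. The closure points of
`ζ ↦ max (τ ζ) (2 ^ |ζ|)` form a club, so by stationarity there is a cardinal `α < κ` with
`SDHL(d,σ,α)` which is such a closure point. Then the tree of all `u ∈ ^{<α}α` with `u ξ < τ ξ`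
is a regular `α`-tree `U`, and each `T i` is the image of `U` under a map `D i` preserving levels
and `⊑` which is onto immediate successors: `u ξ` indexes the successor taken at level `ξ + 1`.
Pull the colouring back along the `D i`, apply `SDHL(d,σ,α)` to `U`, and push the somewhere
dense matrix forward.
-/

open Cardinal Set

/-- A node of `^{<κ}κ`: a function from an ordinal `len < κ` into the ordinals `< κ`,
normalized to take value `0` at or beyond its length (so that equality of nodes is
extensional). -/
structure SeqNode (κ : Cardinal.{0}) : Type 1 where
  len : Ordinal.{0}
  len_lt : len < κ.ord
  val : Ordinal.{0} → Ordinal.{0}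
  val_lt : ∀ β < len, val β < κ.ord
  val_eq_zero : ∀ β, len ≤ β → val β = 0

namespace SeqNode

variable {κ : Cardinal.{0}}

/-- `s.Init t` means `s ⊑ t`, i.e. `s` is an initial segment of `t`. -/
def Init (s t : SeqNode κ) : Prop :=
  s.len ≤ t.len ∧ ∀ β < s.len, s.val β = t.val β

/-- The restriction `t ↾ β` of `t` to length `min β t.len`. -/
noncomputable def restrict (t : SeqNode κ) (β : Ordinal.{0}) : SeqNode κ where
  len := min β t.len
  len_lt := lt_of_le_of_lt (min_le_right _ _) t.len_lt
  val := fun γ => if γ < min β t.len then t.val γ else 0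
  val_lt := fun γ hγ => by
    try dsimp only
    rw [if_pos hγ]
    exact t.val_lt γ (lt_of_lt_of_le hγ (min_le_right _ _))
  val_eq_zero := fun γ hγ => by
    try dsimp only
    rw [if_neg (not_lt.mpr hγ)]

end SeqNode

/-- The level `T(α)`: nodes of `T` of length `α`. -/
def SeqLevel {κ : Cardinal.{0}} (T : Set (SeqNode κ)) (α : Ordinal.{0}) : Set (SeqNode κ) :=
  {t ∈ T | t.len = α}

/-- A tree: a set of nodes closed under initial segments. -/
def IsSeqTree {κ : Cardinal.{0}} (T : Set (SeqNode κ)) : Prop :=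
  ∀ t ∈ T, ∀ s : SeqNode κ, s.Init t → s ∈ T

/-- A branch of `T`: a subset of `T` linearly ordered by the initial segment relation. -/
def IsBranch {κ : Cardinal.{0}} (T b : Set (SeqNode κ)) : Prop :=
  b ⊆ T ∧ ∀ s ∈ b, ∀ t ∈ b, s.Init t ∨ t.Init s

/-- A maximal branch of `T`. -/
def IsMaximalBranch {κ : Cardinal.{0}} (T b : Set (SeqNode κ)) : Prop :=
  IsBranch T b ∧ ∀ b' : Set (SeqNode κ), IsBranch T b' → b ⊆ b' → b' = b

/-- `T` is perfect: every node has two incomparable extensions in `T`. -/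
def IsPerfect {κ : Cardinal.{0}} (T : Set (SeqNode κ)) : Prop :=
  ∀ t ∈ T, ∃ s ∈ T, ∃ u ∈ T, t.Init s ∧ t.Init u ∧ ¬ s.Init u ∧ ¬ u.Init s

/-- `T ⊆ ^{<κ}κ` is a regular tree of height `η`: it is a tree all of whose nodes
have length `< η`, it has nonempty levels of cardinality `< η.card` at every `α < η`,
every maximal branch meets every level `< η`, and it is perfect. -/
def IsRegularTreeIn (κ : Cardinal.{0}) (η : Ordinal.{0}) (T : Set (SeqNode κ)) : Prop :=
  IsSeqTree T ∧
  (∀ t ∈ T, t.len < η) ∧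
  (∀ α < η, (SeqLevel T α).Nonempty) ∧
  (∀ α < η, Cardinal.mk ↥(SeqLevel T α) < Cardinal.lift.{1} η.card) ∧
  (∀ b : Set (SeqNode κ), IsMaximalBranch T b → ∀ α < η, ∃ t ∈ b, t.len = α) ∧
  IsPerfect T

/-- A regular `κ`-tree. -/
def IsRegularTree (κ : Cardinal.{0}) (T : Set (SeqNode κ)) : Prop :=
  IsRegularTreeIn κ κ.ord T

/-- The truncation `T ∩ ^{<α}κ` of `T` below level `α`. -/
def TreeTrunc {κ : Cardinal.{0}} (T : Set (SeqNode κ)) (α : Ordinal.{0}) : Set (SeqNode κ) :=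
  {t ∈ T | t.len < α}

/-- The level product `⊗_{i<d} X_i`: tuples all of whose entries lie on one common level. -/
def LevelProd {κ : Cardinal.{0}} {d : ℕ} (X : Fin d → Set (SeqNode κ)) :
    Set (Fin d → SeqNode κ) :=
  {x | ∃ α : Ordinal.{0}, ∀ i, x i ∈ X i ∧ (x i).len = α}

/-- `X` dominates `Y`: every element of `Y` has an extension in `X`. -/
def Dominates {κ : Cardinal.{0}} (X Y : Set (SeqNode κ)) : Prop :=
  ∀ y ∈ Y, ∃ x ∈ X, SeqNode.Init y x

/-- `Cone t`: all extensions of `t`. -/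
def Cone {κ : Cardinal.{0}} (t : SeqNode κ) : Set (SeqNode κ) :=
  {s : SeqNode κ | t.Init s}

/-- `X` is a somewhere dense level matrix for trees `T` of height `η`. -/
def IsSDMatrixIn {κ : Cardinal.{0}} (η : Ordinal.{0}) {d : ℕ}
    (T X : Fin d → Set (SeqNode κ)) : Prop :=
  ∃ α β : Ordinal.{0}, α < β ∧ β < η ∧
    ∃ t : Fin d → SeqNode κ,
      (∀ i, t i ∈ SeqLevel (T i) α) ∧
      ∀ i, X i ⊆ SeqLevel (T i) β ∧
        Dominates (X i) (SeqLevel (T i) (α + 1) ∩ Cone (t i))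

/-- `X` is a somewhere dense level matrix for the regular `κ`-trees `T`. -/
def IsSDMatrix (κ : Cardinal.{0}) {d : ℕ} (T X : Fin d → Set (SeqNode κ)) : Prop :=
  IsSDMatrixIn κ.ord T X

/-- The coloring `c` is constant (monochromatic) on the level product of `X`. -/
def MonoOn {κ : Cardinal.{0}} {d : ℕ} (c : (Fin d → SeqNode κ) → Ordinal.{0})
    (X : Fin d → Set (SeqNode κ)) : Prop :=
  ∀ x ∈ LevelProd X, ∀ y ∈ LevelProd X, c x = c y

/-- The somewhere dense Halpern–Läuchli theorem `SDHL(d,σ,κ)`. -/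
def SDHL (d : ℕ) (σ κ : Cardinal.{0}) : Prop :=
  ∀ T : Fin d → Set (SeqNode κ), (∀ i, IsRegularTree κ (T i)) →
    ∀ c : (Fin d → SeqNode κ) → Ordinal.{0},
      (∀ x ∈ LevelProd T, c x < σ.ord) →
      ∃ X : Fin d → Set (SeqNode κ), (∀ i, X i ⊆ T i) ∧
        IsSDMatrix κ T X ∧ MonoOn c X

/-- `s` is an immediate successor of `t`. -/
def IsImmediateSucc {κ : Cardinal.{0}} (t s : SeqNode κ) : Prop :=
  t.Init s ∧ s.len = t.len + 1

/-- `A` is a cofinal subset of (the ordinals below) `η`. -/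
def CofinalIn (A : Set Ordinal.{0}) (η : Ordinal.{0}) : Prop :=
  A ⊆ Set.Iio η ∧ ∀ β < η, ∃ α ∈ A, β ≤ α

/-- `T'` is a strong subtree of the regular `κ`-tree `T` witnessed by the cofinal set
`A ⊆ κ` of splitting levels. -/
def IsStrongSubtree (κ : Cardinal.{0}) (T' T : Set (SeqNode κ)) (A : Set Ordinal.{0}) : Prop :=
  T' ⊆ T ∧ IsRegularTree κ T' ∧ CofinalIn A κ.ord ∧
    ∀ t ∈ T',
      (t.len ∈ A → ∀ s ∈ T, IsImmediateSucc t s → s ∈ T') ∧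
      (t.len ∉ A → ∃! s : SeqNode κ, s ∈ T' ∧ IsImmediateSucc t s)

/-- The strong tree Halpern–Läuchli theorem `HL(d,σ,κ)`. -/
def HL (d : ℕ) (σ κ : Cardinal.{0}) : Prop :=
  ∀ T : Fin d → Set (SeqNode κ), (∀ i, IsRegularTree κ (T i)) →
    ∀ c : (Fin d → SeqNode κ) → Ordinal.{0},
      (∀ x ∈ LevelProd T, c x < σ.ord) →
      ∃ T' : Fin d → Set (SeqNode κ), ∃ A : Set Ordinal.{0},
        (∀ i, IsStrongSubtree κ (T' i) (T i) A) ∧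
        ∀ x : Fin d → SeqNode κ, (∃ α ∈ A, ∀ i, x i ∈ SeqLevel (T' i) α) →
          ∀ y : Fin d → SeqNode κ, (∃ α ∈ A, ∀ i, y i ∈ SeqLevel (T' i) α) →
            c x = c y

/-- `e` is the increasing enumeration (along the ordinals below `η`) of `A`. -/
def IsIncreasingEnum (e : Ordinal.{0} → Ordinal.{0}) (η : Ordinal.{0})
    (A : Set Ordinal.{0}) : Prop :=
  (∀ ζ < η, e ζ ∈ A) ∧
  (∀ ζ ξ : Ordinal.{0}, ζ < ξ → ξ < η → e ζ < e ξ) ∧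
  (∀ a ∈ A, ∃ ζ < η, e ζ = a)

/-- The tail cone Halpern–Läuchli theorem `HL^tc(d,<κ,κ)`. -/
def HLtc (d : ℕ) (κ : Cardinal.{0}) : Prop :=
  ∀ T : Fin d → Set (SeqNode κ), (∀ i, IsRegularTree κ (T i)) →
    ∀ σ : Ordinal.{0} → Cardinal.{0}, (∀ ζ < κ.ord, 0 < σ ζ ∧ σ ζ < κ) →
      ∀ c : Ordinal.{0} → (Fin d → SeqNode κ) → Ordinal.{0},
        (∀ ζ < κ.ord, ∀ x ∈ LevelProd T, c ζ x < (σ ζ).ord) →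
        ∃ T' : Fin d → Set (SeqNode κ), ∃ A : Set Ordinal.{0},
          ∃ e : Ordinal.{0} → Ordinal.{0},
            (∀ i, IsStrongSubtree κ (T' i) (T i) A) ∧
            IsIncreasingEnum e κ.ord A ∧
            ∀ ζ ξ : Ordinal.{0}, ζ ≤ ξ → ξ < κ.ord →
              ∀ t : Fin d → SeqNode κ, (∀ i, t i ∈ SeqLevel (T' i) (e ξ)) →
                c ζ t = c ζ (fun i => (t i).restrict (e ζ))

/-- The modified tail cone Halpern–Läuchli theorem. -/
def HLtcMod (d : ℕ) (κ : Cardinal.{0}) : Prop :=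
  ∀ T : Fin d → Set (SeqNode κ), (∀ i, IsRegularTree κ (T i)) →
    ∀ σ : Ordinal.{0} → Cardinal.{0}, (∀ ζ < κ.ord, 0 < σ ζ ∧ σ ζ < κ) →
      ∀ c : Ordinal.{0} → (Fin d → SeqNode κ) → Ordinal.{0},
        (∀ ζ < κ.ord, ∀ x ∈ LevelProd T, c ζ x < (σ ζ).ord) →
        ∃ T' : Fin d → Set (SeqNode κ), ∃ A : Set Ordinal.{0},
          ∃ e : Ordinal.{0} → Ordinal.{0},
            (∀ i, IsStrongSubtree κ (T' i) (T i) A) ∧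
            IsIncreasingEnum e κ.ord A ∧
            ∃ μ : Ordinal.{0} → Ordinal.{0},
              (∀ γ < κ.ord, γ ≤ μ γ ∧ μ γ < κ.ord) ∧
              ∀ ζ γ : Ordinal.{0}, ζ ≤ γ → γ < κ.ord →
                ∀ t : Fin d → SeqNode κ, (∀ i, t i ∈ SeqLevel (T' i) (e γ)) →
                  c (μ ζ) t = c (μ ζ) (fun i => (t i).restrict (e ζ))

/-- `κ` is strongly inaccessible: uncountable, regular, and a strong limit. -/
def StronglyInaccessible (κ : Cardinal.{0}) : Prop :=
  ℵ₀ < κ ∧ κ.IsRegular ∧ ∀ lam : Cardinal.{0}, lam < κ → (2 : Cardinal.{0}) ^ lam < κ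

/-- `C` is a club (closed unbounded) subset of the ordinals below `η`. -/
def IsClubIn (C : Set Ordinal.{0}) (η : Ordinal.{0}) : Prop :=
  C ⊆ Set.Iio η ∧ (∀ β < η, ∃ γ ∈ C, β ≤ γ) ∧
    ∀ s ⊆ C, s.Nonempty → sSup s < η → sSup s ∈ C

/-- `S` is a stationary subset of the ordinals below `η`. -/
def IsStationaryIn (S : Set Ordinal.{0}) (η : Ordinal.{0}) : Prop :=
  ∀ C : Set Ordinal.{0}, IsClubIn C η → (S ∩ C).Nonempty

/-- `U` is an ultrafilter on the ordinals below `η`. -/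
def IsUltrafilterOn (U : Set (Set Ordinal.{0})) (η : Ordinal.{0}) : Prop :=
  (∀ A ∈ U, A ⊆ Set.Iio η) ∧ Set.Iio η ∈ U ∧ (∅ : Set Ordinal.{0}) ∉ U ∧
  (∀ A ∈ U, ∀ B : Set Ordinal.{0}, A ⊆ B → B ⊆ Set.Iio η → B ∈ U) ∧
  (∀ A ∈ U, ∀ B ∈ U, A ∩ B ∈ U) ∧
  (∀ A : Set Ordinal.{0}, A ⊆ Set.Iio η → (A ∈ U ∨ Set.Iio η \ A ∈ U))

/-- `U` is `κ`-complete: closed under intersections of fewer than `κ` of its members. -/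
def IsKappaComplete (U : Set (Set Ordinal.{0})) (κ : Cardinal.{0}) : Prop :=
  ∀ s : Set (Set Ordinal.{0}), s ⊆ U → s.Nonempty →
    Cardinal.mk ↥s < Cardinal.lift.{1} κ → ⋂₀ s ∈ U

/-- `U` is nonprincipal. -/
def IsNonprincipal (U : Set (Set Ordinal.{0})) : Prop :=
  ∀ β : Ordinal.{0}, ({β} : Set Ordinal.{0}) ∉ U

/-- `U` is a normal ultrafilter on `κ`: a nonprincipal `κ`-complete ultrafilter closed
under diagonal intersections. -/
def IsNormalUltrafilterOn (U : Set (Set Ordinal.{0})) (κ : Cardinal.{0}) : Prop :=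
  IsUltrafilterOn U κ.ord ∧ IsKappaComplete U κ ∧ IsNonprincipal U ∧
    ∀ A : Ordinal.{0} → Set Ordinal.{0}, (∀ α < κ.ord, A α ∈ U) →
      {β : Ordinal.{0} | β < κ.ord ∧ ∀ α < β, β ∈ A α} ∈ U

/-- `κ` is a measurable cardinal. -/
def IsMeasurableCard (κ : Cardinal.{0}) : Prop :=
  ℵ₀ < κ ∧ ∃ U : Set (Set Ordinal.{0}),
    IsUltrafilterOn U κ.ord ∧ IsKappaComplete U κ ∧ IsNonprincipal U

/-- The set of (ordinals which are) infinite cardinals `α < κ` with `σ < α` at which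
`SDHL(d,σ,α)` holds, viewed as a set of ordinals below `κ`. -/
def SDHLset (d : ℕ) (σ κ : Cardinal.{0}) : Set Ordinal.{0} :=
  {β : Ordinal.{0} | β < κ.ord ∧ ℵ₀ ≤ β.card ∧ β.card.ord = β ∧ σ < β.card ∧
    SDHL d σ β.card}

namespace SeqNode

variable {κ : Cardinal.{0}}

theorem ext {s t : SeqNode κ} (hlen : s.len = t.len) (hval : ∀ β < s.len, s.val β = t.val β) :
    s = t := by
  obtain ⟨ls, _, vs, _, hzs⟩ := s
  obtain ⟨lt, _, vt, _, hzt⟩ := t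
  obtain rfl : ls = lt := hlen
  obtain rfl : vs = vt := funext fun β => by
    by_cases hβ : β < ls
    · exact hval β hβ
    · rw [hzs β (not_lt.mp hβ), hzt β (not_lt.mp hβ)]
  rfl

theorem Init.refl (t : SeqNode κ) : t.Init t := ⟨le_rfl, fun _ _ => rfl⟩

theorem Init.trans {s t u : SeqNode κ} (hst : s.Init t) (htu : t.Init u) : s.Init u :=
  ⟨hst.1.trans htu.1, fun β hβ => (hst.2 β hβ).trans (htu.2 β (hβ.trans_le hst.1))⟩

theorem Init.eq_of_len_le {s t : SeqNode κ} (h : s.Init t) (hle : t.len ≤ s.len) : s = t :=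
  ext (h.1.antisymm hle) h.2

theorem Init.total_of_init {s t u : SeqNode κ} (hs : s.Init u) (ht : t.Init u) :
    s.Init t ∨ t.Init s := by
  rcases le_total s.len t.len with h | h
  · exact .inl ⟨h, fun β hβ => (hs.2 β hβ).trans (ht.2 β (hβ.trans_le h)).symm⟩
  · exact .inr ⟨h, fun β hβ => (ht.2 β hβ).trans (hs.2 β (hβ.trans_le h)).symm⟩

theorem Init.eq_of_len_eq {s t u : SeqNode κ} (hs : s.Init u) (ht : t.Init u)
    (hlen : s.len = t.len) : s = t := by
  rcases hs.total_of_init ht with h | h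
  · exact h.eq_of_len_le hlen.ge
  · exact (h.eq_of_len_le hlen.le).symm

theorem restrict_len {t : SeqNode κ} {β : Ordinal.{0}} (h : β ≤ t.len) :
    (t.restrict β).len = β :=
  min_eq_left h

theorem restrict_init (t : SeqNode κ) (β : Ordinal.{0}) : (t.restrict β).Init t :=
  ⟨min_le_right _ _, fun _ hγ => if_pos hγ⟩

noncomputable def snoc (t : SeqNode κ) (j : Ordinal.{0}) (hlen : t.len + 1 < κ.ord)
    (hj : j < κ.ord) : SeqNode κ where
  len := t.len + 1
  len_lt := hlen
  val β := if β < t.len then t.val β else if β = t.len then j else 0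
  val_lt β hβ := by
    split_ifs with h₁ h₂
    · exact t.val_lt β h₁
    · exact hj
    · exact absurd (Order.lt_add_one_iff.mp hβ) (by order)
  val_eq_zero β hβ := by
    have : t.len < β := (lt_add_one t.len).trans_le hβ
    rw [if_neg this.not_gt, if_neg this.ne']

variable {t : SeqNode κ} {j : Ordinal.{0}} {hlen : t.len + 1 < κ.ord} {hj : j < κ.ord}

theorem snoc_val_of_lt {β : Ordinal.{0}} (hβ : β < t.len) : (snoc t j hlen hj).val β = t.val β :=
  if_pos hβ

@[simp] theorem snoc_val_len : (snoc t j hlen hj).val t.len = j := by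
  simp [snoc]

theorem init_snoc : t.Init (snoc t j hlen hj) :=
  ⟨(lt_add_one _).le, fun _ hβ => (snoc_val_of_lt hβ).symm⟩

end SeqNode

section Trees

open SeqNode

variable {κ : Cardinal.{0}} {T b : Set (SeqNode κ)}

theorem isBranch_singleton {t : SeqNode κ} (ht : t ∈ T) : IsBranch T {t} :=
  ⟨singleton_subset_iff.mpr ht, by rintro _ rfl _ rfl; exact .inl (Init.refl _)⟩

theorem IsBranch.exists_maximalBranch_superset (hb : IsBranch T b) :
    ∃ m, b ⊆ m ∧ IsMaximalBranch T m := by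
  have hchain (c : Set (Set (SeqNode κ))) (hc : c ⊆ {b | IsBranch T b})
      (hchain : IsChain (· ⊆ ·) c) : IsBranch T (⋃₀ c) := by
    refine ⟨sUnion_subset fun b hb => (hc hb).1, ?_⟩
    rintro s ⟨b₁, hb₁, hs⟩ t ⟨b₂, hb₂, ht⟩
    rcases hchain.total hb₁ hb₂ with h | h
    · exact (hc hb₂).2 s (h hs) t ht
    · exact (hc hb₁).2 s hs t (h ht)
  obtain ⟨m, hbm, hmax⟩ := zorn_subset_nonempty {b | IsBranch T b}
    (fun c hc hc' _ => ⟨⋃₀ c, hchain c hc hc', fun _ => subset_sUnion_of_mem⟩) b hb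
  exact ⟨m, hbm, hmax.prop, fun b' hb' hmb' => (hmax.eq_of_subset hb' hmb').symm⟩

theorem IsMaximalBranch.mem_of_forall_comparable (hm : IsMaximalBranch T b) {t : SeqNode κ}
    (ht : t ∈ T) (hcomp : ∀ s ∈ b, s.Init t ∨ t.Init s) : t ∈ b := by
  have hbr : IsBranch T (insert t b) := by
    refine ⟨insert_subset ht hm.1.1, ?_⟩
    rintro s (rfl | hs) u (hu | hu)
    · exact .inl (hu ▸ Init.refl _)
    · exact (hcomp u hu).symm
    · exact hu ▸ hcomp s hs
    · exact hm.1.2 s hs u hu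
  rw [← hm.2 _ hbr (subset_insert t b)]
  exact mem_insert t b

theorem IsMaximalBranch.exists_len_eq (hT : IsSeqTree T) (hm : IsMaximalBranch T b)
    {ζ : Ordinal.{0}} (hext : (∀ s ∈ b, s.len < ζ) → ∃ w ∈ SeqLevel T ζ, ∀ s ∈ b, s.Init w) :
    ∃ t ∈ b, t.len = ζ := by
  by_cases hbelow : ∀ s ∈ b, s.len < ζ
  · obtain ⟨w, ⟨hwT, hwζ⟩, hbw⟩ := hext hbelow
    exact ⟨w, hm.mem_of_forall_comparable hwT fun s hs => .inl (hbw s hs), hwζ⟩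
  push Not at hbelow
  obtain ⟨v, hv, hζv⟩ := hbelow
  refine ⟨v.restrict ζ, hm.mem_of_forall_comparable (hT v (hm.1.1 hv) _ (restrict_init v ζ))
    fun s hs => ?_, restrict_len hζv⟩
  rcases hm.1.2 s hs v hv with h | h
  · exact h.total_of_init (restrict_init v ζ)
  · exact .inr ((restrict_init v ζ).trans h)

theorem IsRegularTree.exists_level_extension (hT : IsRegularTree κ T) (hb : IsBranch T b)
    {ζ : Ordinal.{0}} (hζ : ζ < κ.ord) (hlen : ∀ s ∈ b, s.len ≤ ζ) :
    ∃ w ∈ SeqLevel T ζ, ∀ s ∈ b, s.Init w := by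
  obtain ⟨m, hbm, hm⟩ := hb.exists_maximalBranch_superset
  obtain ⟨w, hwm, hwζ⟩ := hT.2.2.2.2.1 m hm ζ hζ
  refine ⟨w, ⟨hm.1.1 hwm, hwζ⟩, fun s hs => ?_⟩
  rcases hm.1.2 s (hbm hs) w hwm with h | h
  · exact h
  · rw [h.eq_of_len_le (hwζ ▸ hlen s hs)]
    exact Init.refl s

theorem IsRegularTree.exists_extension (hT : IsRegularTree κ T) {t : SeqNode κ} (ht : t ∈ T)
    {ζ : Ordinal.{0}} (hζ : ζ < κ.ord) (hle : t.len ≤ ζ) : ∃ w ∈ SeqLevel T ζ, t.Init w := by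
  obtain ⟨w, hw, htw⟩ := hT.exists_level_extension (isBranch_singleton ht) hζ (by simpa)
  exact ⟨w, hw, htw t rfl⟩

theorem IsRegularTree.mk_level_mono (hT : IsRegularTree κ T) {δ δ' : Ordinal.{0}} (h : δ ≤ δ')
    (hδ' : δ' < κ.ord) : #(SeqLevel T δ) ≤ #(SeqLevel T δ') := by
  have hext (t : SeqLevel T δ) : ∃ w ∈ SeqLevel T δ', (t : SeqNode κ).Init w :=
    hT.exists_extension t.2.1 hδ' (t.2.2.trans_le h)
  choose f hf htf using hext
  refine mk_le_of_injective (f := fun t => ⟨f t, hf t⟩) fun t₁ t₂ he => Subtype.ext ?_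
  have he : f t₁ = f t₂ := congrArg Subtype.val he
  exact (htf t₁).eq_of_len_eq (he ▸ htf t₂) (t₁.2.2.trans t₂.2.2.symm)

end Trees

section BranchingTree

open SeqNode

variable {α : Cardinal.{0}} {τ : Ordinal.{0} → Cardinal.{0}}

def branchingTree (α : Cardinal.{0}) (τ : Ordinal.{0} → Cardinal.{0}) : Set (SeqNode α) :=
  {u | ∀ ξ < u.len, u.val ξ < (τ ξ).ord}

open Classical in
noncomputable def SeqNode.glue (b : Set (SeqNode α)) (ζ : Ordinal.{0}) (hζ : ζ < α.ord) :
    SeqNode α where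
  len := ζ
  len_lt := hζ
  val γ := if h : ∃ v ∈ b, γ < v.len ∧ γ < ζ then h.choose.val γ else 0
  val_lt γ hγ := by
    split_ifs with h
    · exact h.choose.val_lt γ h.choose_spec.2.1
    · exact pos_of_gt (hγ.trans hζ)
  val_eq_zero γ hγ := dif_neg fun ⟨_, _, _, h⟩ => hγ.not_gt h

theorem SeqNode.init_glue {b : Set (SeqNode α)} (hb : ∀ s ∈ b, ∀ t ∈ b, s.Init t ∨ t.Init s)
    {ζ : Ordinal.{0}} (hζ : ζ < α.ord) {v : SeqNode α} (hv : v ∈ b) (hvζ : v.len ≤ ζ) :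
    v.Init (glue b ζ hζ) := by
  refine ⟨hvζ, fun γ hγ => ?_⟩
  have h : ∃ w ∈ b, γ < w.len ∧ γ < ζ := ⟨v, hv, hγ, hγ.trans_le hvζ⟩
  dsimp only [glue]
  rw [dif_pos h]
  rcases hb v hv _ h.choose_spec.1 with hvw | hwv
  · exact hvw.2 γ hγ
  · exact (hwv.2 γ h.choose_spec.2.1).symm

theorem SeqNode.glue_mem_branchingTree (hτ : ∀ ξ, 0 < τ ξ) {b : Set (SeqNode α)}
    (hb : b ⊆ branchingTree α τ) {ζ : Ordinal.{0}} (hζ : ζ < α.ord) :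
    glue b ζ hζ ∈ branchingTree α τ := by
  intro ξ hξ
  dsimp only [glue]
  split_ifs with h
  · exact hb h.choose_spec.1 ξ h.choose_spec.2.1
  · exact Cardinal.ord_pos.mpr (hτ ξ)

theorem SeqNode.snoc_mem_branchingTree {u : SeqNode α} (hu : u ∈ branchingTree α τ)
    {j : Ordinal.{0}} (hlen : u.len + 1 < α.ord) (hj : j < α.ord) (hjτ : j < (τ u.len).ord) :
    snoc u j hlen hj ∈ branchingTree α τ := by
  intro ξ hξ
  rcases (Order.lt_add_one_iff.mp hξ).lt_or_eq with hξu | rfl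
  · rw [snoc_val_of_lt hξu]
    exact hu ξ hξu
  · rwa [snoc_val_len]

theorem isSeqTree_branchingTree : IsSeqTree (branchingTree α τ) := by
  intro t ht s hst ξ hξ
  rw [hst.2 ξ hξ]
  exact ht ξ (hξ.trans_le hst.1)

theorem mk_level_branchingTree_le (hτ : MonotoneOn τ (Iio α.ord)) {ζ : Ordinal.{0}}
    (hζ : ζ < α.ord) :
    #(SeqLevel (branchingTree α τ) ζ) ≤ Cardinal.lift.{1} (τ ζ ^ ζ.card) := by
  let code (u : SeqLevel (branchingTree α τ) ζ) (ξ : Iio ζ) : Iio (τ ζ).ord :=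
    ⟨(u : SeqNode α).val ξ, (u.2.1 ξ (lt_of_lt_of_eq ξ.2 u.2.2.symm)).trans_le
      (Cardinal.ord_le_ord.mpr (hτ (ξ.2.trans hζ) hζ ξ.2.le))⟩
  have hcode : Function.Injective code := by
    intro u₁ u₂ h
    refine Subtype.ext (SeqNode.ext (u₁.2.2.trans u₂.2.2.symm) fun β hβ => ?_)
    exact congrArg Subtype.val (congrFun h ⟨β, lt_of_lt_of_eq hβ u₁.2.2⟩)
  calc #(SeqLevel (branchingTree α τ) ζ) ≤ #(Iio ζ → Iio (τ ζ).ord) := mk_le_of_injective hcode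
    _ = Cardinal.lift.{1} (τ ζ ^ ζ.card) := by
      rw [← Cardinal.power_def, mk_Iio_ordinal, mk_Iio_ordinal, card_ord, ← lift_power]

theorem isPerfect_branchingTree (hα : ℵ₀ ≤ α) (hτ : ∀ ξ, 2 ≤ τ ξ) :
    IsPerfect (branchingTree α τ) := by
  intro u hu
  have hlen : u.len + 1 < α.ord := (isSuccLimit_ord hα).add_one_lt u.len_lt
  have h₀ : (0 : Ordinal.{0}) < α.ord := pos_of_gt u.len_lt
  have h₁ : (1 : Ordinal.{0}) < α.ord := by
    rw [lt_ord, Ordinal.card_one]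
    exact one_lt_aleph0.trans_le hα
  have hτ₁ : (1 : Ordinal.{0}) < (τ u.len).ord := by
    rw [lt_ord, Ordinal.card_one]
    exact Cardinal.one_lt_two.trans_le (hτ u.len)
  have hval {j j' : Ordinal.{0}} (hj : j < α.ord) (hj' : j' < α.ord)
      (h : (snoc u j hlen hj).Init (snoc u j' hlen hj')) : j = j' := by
    simpa using h.2 u.len (lt_add_one _)
  exact ⟨_, snoc_mem_branchingTree hu hlen h₀ (zero_lt_one.trans hτ₁), _,
    snoc_mem_branchingTree hu hlen h₁ hτ₁, init_snoc, init_snoc,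
    fun h => zero_ne_one (hval h₀ h₁ h), fun h => one_ne_zero (hval h₁ h₀ h)⟩

theorem isRegularTree_branchingTree (hα : ℵ₀ ≤ α) (hτ₂ : ∀ ξ, 2 ≤ τ ξ)
    (hτ : MonotoneOn τ (Iio α.ord)) (hpow : ∀ ζ < α.ord, τ ζ ^ ζ.card < α) :
    IsRegularTree α (branchingTree α τ) := by
  have hτ₀ (ξ : Ordinal.{0}) : 0 < τ ξ := two_pos.trans_le (hτ₂ ξ)
  refine ⟨isSeqTree_branchingTree, fun t _ => t.len_lt, fun ζ hζ => ?_, fun ζ hζ => ?_,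
    fun b hb ζ hζ => ?_, isPerfect_branchingTree hα hτ₂⟩
  · exact ⟨glue ∅ ζ hζ, glue_mem_branchingTree hτ₀ (empty_subset _) hζ, rfl⟩
  · rw [card_ord]
    exact (mk_level_branchingTree_le hτ hζ).trans_lt (lift_lt.mpr (hpow ζ hζ))
  · refine hb.exists_len_eq isSeqTree_branchingTree fun hbelow => ?_
    exact ⟨glue b ζ hζ, ⟨glue_mem_branchingTree hτ₀ hb.1.1 hζ, rfl⟩,
      fun s hs => init_glue hb.1.2 hζ hs (hbelow s hs).le⟩

end BranchingTree

theorem exists_enum_of_mk_le.{u} {β : Type (u + 1)} {S : Set β} (hS : S.Nonempty)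
    {c : Cardinal.{u}} (h : #S ≤ Cardinal.lift.{u + 1} c) :
    ∃ e : Ordinal.{u} → β, range e ⊆ S ∧ S ⊆ e '' Iio c.ord := by
  obtain ⟨y₀, hy₀⟩ := hS
  rw [← card_ord c, ← mk_Iio_ordinal] at h
  obtain ⟨f, hf⟩ : ∃ f : Iio c.ord → S, Function.Surjective f :=
    Function.exists_surjective_iff.mpr ⟨⟨fun _ => ⟨y₀, hy₀⟩⟩, Cardinal.le_def _ _ |>.mp h⟩
  refine ⟨fun j => if hj : j < c.ord then f ⟨j, hj⟩ else y₀, ?_, fun y hy => ?_⟩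
  · rintro _ ⟨j, rfl⟩
    dsimp only
    split_ifs
    exacts [(f _).2, hy₀]
  · obtain ⟨⟨j, hj⟩, hfj⟩ := hf ⟨y, hy⟩
    exact ⟨j, hj, by simp only [dif_pos (show j < c.ord from hj), hfj]⟩

def IsTreeCover {α κ : Cardinal.{0}} (U : Set (SeqNode α)) (T : Set (SeqNode κ))
    (D : SeqNode α → SeqNode κ) : Prop :=
  MapsTo D U T ∧ (∀ u ∈ U, (D u).len = u.len) ∧
    (∀ u ∈ U, ∀ u' ∈ U, u.Init u' → (D u).Init (D u')) ∧
    ∀ u ∈ U, ∀ y ∈ SeqLevel T (u.len + 1) ∩ Cone (D u),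
      ∃ u' ∈ SeqLevel U (u.len + 1) ∩ Cone u, D u' = y

theorem IsTreeCover.mem_level {α κ : Cardinal.{0}} {U : Set (SeqNode α)} {T : Set (SeqNode κ)}
    {D : SeqNode α → SeqNode κ} (hD : IsTreeCover U T D) {ζ : Ordinal.{0}} {u : SeqNode α}
    (hu : u ∈ SeqLevel U ζ) : D u ∈ SeqLevel T ζ :=
  ⟨hD.1 hu.1, (hD.2.1 u hu.1).trans hu.2⟩

section Decoding

open SeqNode

variable {κ α : Cardinal.{0}} (T : Set (SeqNode κ)) (e : SeqNode κ → Ordinal.{0} → SeqNode κ)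
  (r : SeqNode κ)

/-- `u` is read as a code: `u.val ξ` selects, through the enumeration `e`, the successor taken at
level `ξ + 1`. -/
noncomputable def decodeAt (u : SeqNode α) (ζ : Ordinal.{0}) : SeqNode κ :=
  Ordinal.limitRecOn ζ r (fun ξ t => e t (u.val ξ)) fun ζ _ prev =>
    @Classical.epsilon _ ⟨r⟩ fun w => w ∈ SeqLevel T ζ ∧ ∀ ξ (hξ : ξ < ζ), (prev ξ hξ).Init w

variable {T e r} {u : SeqNode α}

theorem decodeAt_zero : decodeAt T e r u 0 = r :=
  Ordinal.limitRecOn_zero ..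

theorem decodeAt_add_one (ζ : Ordinal.{0}) :
    decodeAt T e r u (ζ + 1) = e (decodeAt T e r u ζ) (u.val ζ) :=
  Ordinal.limitRecOn_add_one ..

theorem decodeAt_limit {ζ : Ordinal.{0}} (hζ : Order.IsSuccLimit ζ) :
    decodeAt T e r u ζ = @Classical.epsilon _ ⟨r⟩
      fun w => w ∈ SeqLevel T ζ ∧ ∀ ξ < ζ, (decodeAt T e r u ξ).Init w :=
  Ordinal.limitRecOn_limit _ _ _ _ hζ

theorem decodeAt_congr {u' : SeqNode α} {ζ : Ordinal.{0}}
    (h : ∀ ξ < ζ, u.val ξ = u'.val ξ) : decodeAt T e r u ζ = decodeAt T e r u' ζ := by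
  induction ζ using Ordinal.limitRecOn with
  | zero => rw [decodeAt_zero, decodeAt_zero]
  | add_one ξ ih =>
    rw [decodeAt_add_one, decodeAt_add_one, h ξ (lt_add_one ξ),
      ih fun η hη => h η (hη.trans (lt_add_one ξ))]
  | limit ζ hζ ih =>
    rw [decodeAt_limit hζ, decodeAt_limit hζ]
    congr 1
    ext w
    refine and_congr_right fun _ => forall₂_congr fun ξ hξ => ?_
    rw [ih ξ hξ fun η hη => h η (hη.trans hξ)]

theorem decodeAt_spec (hT : IsRegularTree κ T) (hr : r ∈ SeqLevel T 0)
    (he : ∀ t ∈ T, t.len + 1 < κ.ord → ∀ j, e t j ∈ SeqLevel T (t.len + 1) ∩ Cone t)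
    (u : SeqNode α) {ζ : Ordinal.{0}} (hζ : ζ < κ.ord) :
    decodeAt T e r u ζ ∈ SeqLevel T ζ ∧
      ∀ ξ < ζ, (decodeAt T e r u ξ).Init (decodeAt T e r u ζ) := by
  induction ζ using Ordinal.limitRecOn with
  | zero => exact ⟨decodeAt_zero ▸ hr, fun _ hξ => (not_lt_zero hξ).elim⟩
  | add_one ξ ih =>
    obtain ⟨⟨hmem, hlen⟩, hinit⟩ := ih ((lt_add_one ξ).trans hζ)
    obtain ⟨⟨hT', hlen'⟩, hcone⟩ := he _ hmem (by rwa [hlen]) (u.val ξ)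
    rw [decodeAt_add_one]
    refine ⟨⟨hT', hlen'.trans (by rw [hlen])⟩, fun η hη => ?_⟩
    rcases (Order.lt_add_one_iff.mp hη).lt_or_eq with hηξ | rfl
    · exact (hinit η hηξ).trans hcone
    · exact hcone
  | limit ζ hlim ih =>
    have hchain : IsBranch T ((fun ξ => decodeAt T e r u ξ) '' Iio ζ) := by
      refine ⟨image_subset_iff.mpr fun ξ hξ => (ih ξ hξ (hξ.trans hζ)).1.1, ?_⟩
      rintro _ ⟨ξ₁, h₁, rfl⟩ _ ⟨ξ₂, h₂, rfl⟩
      rcases lt_trichotomy ξ₁ ξ₂ with h | rfl | h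
      · exact .inl ((ih ξ₂ h₂ (h₂.trans hζ)).2 ξ₁ h)
      · exact .inl (Init.refl _)
      · exact .inr ((ih ξ₁ h₁ (h₁.trans hζ)).2 ξ₂ h)
    obtain ⟨w, hw, hbw⟩ := hT.exists_level_extension hchain hζ (by
      rintro _ ⟨ξ, hξ, rfl⟩
      exact ((ih ξ hξ (hξ.trans hζ)).1.2).trans_le hξ.le)
    have hex : ∃ w, w ∈ SeqLevel T ζ ∧ ∀ ξ < ζ, (decodeAt T e r u ξ).Init w :=
      ⟨w, hw, fun ξ hξ => hbw _ (mem_image_of_mem _ hξ)⟩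
    rw [decodeAt_limit hlim]
    exact Classical.epsilon_spec hex

theorem isTreeCover_decodeAt {τ : Ordinal.{0} → Cardinal.{0}} (hT : IsRegularTree κ T)
    (hr : r ∈ SeqLevel T 0)
    (he : ∀ t ∈ T, t.len + 1 < κ.ord → range (e t) ⊆ SeqLevel T (t.len + 1) ∩ Cone t ∧
      SeqLevel T (t.len + 1) ∩ Cone t ⊆ e t '' Iio (τ t.len).ord)
    (hα : ℵ₀ ≤ α) (hακ : α.ord ≤ κ.ord) (hτ : ∀ ζ < α.ord, τ ζ < α) :
    IsTreeCover (branchingTree α τ) T fun u => decodeAt T e r u u.len := by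
  have spec (u : SeqNode α) := decodeAt_spec hT hr (fun t ht hlt j => (he t ht hlt).1 ⟨j, rfl⟩)
    u (u.len_lt.trans_le hακ)
  refine ⟨fun u _ => (spec u).1.1, fun u _ => (spec u).1.2, fun u _ u' _ huu' => ?_,
    fun u hu y hy => ?_⟩
  · dsimp only
    rw [decodeAt_congr huu'.2]
    rcases huu'.1.lt_or_eq with hlt | heq
    · exact (spec u').2 _ hlt
    · rw [heq]
      exact Init.refl _
  · obtain ⟨⟨hmem, hlen⟩, -⟩ := spec u
    have hsucc : u.len + 1 < α.ord := (isSuccLimit_ord hα).add_one_lt u.len_lt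
    obtain ⟨j, hj, rfl⟩ := (he _ hmem (by rw [hlen]; exact hsucc.trans_le hακ)).2 (by rwa [hlen])
    rw [hlen] at hj
    have hjα : j < α.ord := hj.trans (ord_lt_ord.mpr (hτ _ u.len_lt))
    refine ⟨snoc u j hsucc hjα, ⟨⟨snoc_mem_branchingTree hu hsucc hjα hj, rfl⟩, init_snoc⟩, ?_⟩
    change decodeAt T e r _ (u.len + 1) = _
    rw [decodeAt_add_one, snoc_val_len, decodeAt_congr fun ξ hξ => snoc_val_of_lt hξ]

end Decoding

theorem IsRegularTree.exists_succ_enum {κ : Cardinal.{0}} {T : Set (SeqNode κ)}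
    (hT : IsRegularTree κ T) {τ : Ordinal.{0} → Cardinal.{0}}
    (hτ : ∀ ζ, ζ + 1 < κ.ord → #(SeqLevel T (ζ + 1)) ≤ Cardinal.lift.{1} (τ ζ)) :
    ∃ e : SeqNode κ → Ordinal.{0} → SeqNode κ, ∀ t ∈ T, t.len + 1 < κ.ord →
      range (e t) ⊆ SeqLevel T (t.len + 1) ∩ Cone t ∧
      SeqLevel T (t.len + 1) ∩ Cone t ⊆ e t '' Iio (τ t.len).ord := by
  have h (t : SeqNode κ) : ∃ f : Ordinal.{0} → SeqNode κ, t ∈ T → t.len + 1 < κ.ord →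
      range f ⊆ SeqLevel T (t.len + 1) ∩ Cone t ∧
      SeqLevel T (t.len + 1) ∩ Cone t ⊆ f '' Iio (τ t.len).ord := by
    by_cases ht : t ∈ T ∧ t.len + 1 < κ.ord
    · obtain ⟨y, hy, hty⟩ := hT.exists_extension ht.1 ht.2 (lt_add_one _).le
      obtain ⟨f, hf⟩ := exists_enum_of_mk_le (S := SeqLevel T (t.len + 1) ∩ Cone t) ⟨y, hy, hty⟩
        ((mk_le_mk_of_subset inter_subset_left).trans (hτ _ ht.2))
      exact ⟨f, fun _ _ => hf⟩
    · exact ⟨fun _ => t, fun h₁ h₂ => (ht ⟨h₁, h₂⟩).elim⟩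
  choose e he using h
  exact ⟨e, he⟩

theorem IsRegularTree.exists_isTreeCover {κ α : Cardinal.{0}} {T : Set (SeqNode κ)}
    (hT : IsRegularTree κ T) {τ : Ordinal.{0} → Cardinal.{0}}
    (hτT : ∀ ζ, ζ + 1 < κ.ord → #(SeqLevel T (ζ + 1)) ≤ Cardinal.lift.{1} (τ ζ))
    (hα : ℵ₀ ≤ α) (hακ : α.ord ≤ κ.ord) (hτ : ∀ ζ < α.ord, τ ζ < α) :
    ∃ D, IsTreeCover (branchingTree α τ) T D := by
  obtain ⟨e, he⟩ := hT.exists_succ_enum hτT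
  have hκ : (0 : Ordinal.{0}) < κ.ord := (ord_pos.mpr (aleph0_pos.trans_le hα)).trans_le hακ
  obtain ⟨r, hr⟩ := hT.2.2.1 0 hκ
  exact ⟨_, isTreeCover_decodeAt hT hr he hα hακ hτ⟩

section Transfer

variable {κ α : Cardinal.{0}} {d : ℕ} {U : Fin d → Set (SeqNode α)} {T : Fin d → Set (SeqNode κ)}
  {D : Fin d → SeqNode α → SeqNode κ} {X : Fin d → Set (SeqNode α)}

theorem IsSDMatrixIn.image_of_isTreeCover (hD : ∀ i, IsTreeCover (U i) (T i) (D i))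
    {η η' : Ordinal.{0}} (hη : η ≤ η') (hX : IsSDMatrixIn η U X) :
    IsSDMatrixIn η' T fun i => D i '' X i := by
  obtain ⟨a, b, hab, hb, t, ht, hX⟩ := hX
  refine ⟨a, b, hab, hb.trans_le hη, fun i => D i (t i), fun i => (hD i).mem_level (ht i),
    fun i => ⟨image_subset_iff.mpr fun x hx => (hD i).mem_level ((hX i).1 hx), fun y hy => ?_⟩⟩
  have hy' : y ∈ SeqLevel (T i) ((t i).len + 1) ∩ Cone (D i (t i)) := by rwa [(ht i).2]
  obtain ⟨u, hu, rfl⟩ := (hD i).2.2.2 (t i) (ht i).1 y hy'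
  obtain ⟨x, hx, hux⟩ := (hX i).2 u (by rwa [(ht i).2] at hu)
  exact ⟨D i x, mem_image_of_mem _ hx, (hD i).2.2.1 u hu.1.1 x ((hX i).1 hx).1 hux⟩

theorem MonoOn.image_of_len_eq (hD : ∀ i, ∀ u ∈ X i, (D i u).len = u.len)
    {c : (Fin d → SeqNode κ) → Ordinal.{0}} (h : MonoOn (fun x => c fun i => D i (x i)) X) :
    MonoOn c fun i => D i '' X i := by
  have hpre : ∀ x ∈ LevelProd fun i => D i '' X i,
      ∃ x' ∈ LevelProd X, (fun i => D i (x' i)) = x := by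
    rintro x ⟨γ, hx⟩
    choose x' hx' hDx' using fun i => (hx i).1
    refine ⟨x', ⟨γ, fun i => ⟨hx' i, ?_⟩⟩, funext hDx'⟩
    rw [← hD i _ (hx' i), hDx' i, (hx i).2]
  intro x hx y hy
  obtain ⟨x', hx', rfl⟩ := hpre x hx
  obtain ⟨y', hy', rfl⟩ := hpre y hy
  exact h x' hx' y' hy'

end Transfer

section BranchingBound

variable {κ : Cardinal.{0}}

/-- `#T(ζ)` lowered to `Cardinal.{0}` (junk value `0` if it is not a lifted cardinal). -/
noncomputable def levelCard (T : Set (SeqNode κ)) (ζ : Ordinal.{0}) : Cardinal.{0} :=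
  sInf {c | Cardinal.lift.{1} c = #(SeqLevel T ζ)}

theorem lift_levelCard {T : Set (SeqNode κ)} (hT : IsRegularTree κ T) {ζ : Ordinal.{0}}
    (hζ : ζ < κ.ord) : Cardinal.lift.{1} (levelCard T ζ) = #(SeqLevel T ζ) := by
  have hlt := hT.2.2.2.1 ζ hζ
  rw [card_ord] at hlt
  exact csInf_mem (s := {c | Cardinal.lift.{1} c = _}) (mem_range_lift_of_le hlt.le)

theorem levelCard_lt {T : Set (SeqNode κ)} (hT : IsRegularTree κ T) {ζ : Ordinal.{0}}
    (hζ : ζ < κ.ord) : levelCard T ζ < κ := by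
  have hlt := hT.2.2.2.1 ζ hζ
  rwa [card_ord, ← lift_levelCard hT hζ, lift_lt] at hlt

theorem levelCard_monotoneOn {T : Set (SeqNode κ)} (hT : IsRegularTree κ T) :
    MonotoneOn (levelCard T) (Iio κ.ord) := by
  intro a ha b hb hab
  rw [← lift_le.{1}, lift_levelCard hT ha, lift_levelCard hT hb]
  exact hT.mk_level_mono hab hb

/-- The `2` makes the branching tree perfect. -/
noncomputable def branchingBound {d : ℕ} (T : Fin d → Set (SeqNode κ)) (ζ : Ordinal.{0}) :
    Cardinal.{0} :=
  max 2 (Finset.univ.sup fun i => levelCard (T i) (ζ + 1))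

variable {d : ℕ} {T : Fin d → Set (SeqNode κ)}

theorem two_le_branchingBound (ζ : Ordinal.{0}) : 2 ≤ branchingBound T ζ :=
  le_max_left _ _

theorem mk_level_le_branchingBound (hT : ∀ i, IsRegularTree κ (T i)) (i : Fin d)
    {ζ : Ordinal.{0}} (hζ : ζ + 1 < κ.ord) :
    #(SeqLevel (T i) (ζ + 1)) ≤ Cardinal.lift.{1} (branchingBound T ζ) := by
  rw [← lift_levelCard (hT i) hζ, lift_le]
  exact (Finset.le_sup (f := fun i => levelCard (T i) (ζ + 1)) (Finset.mem_univ i)).trans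
    (le_max_right _ _)

theorem branchingBound_lt (hT : ∀ i, IsRegularTree κ (T i)) (hκ : ℵ₀ ≤ κ) {ζ : Ordinal.{0}}
    (hζ : ζ < κ.ord) : branchingBound T ζ < κ :=
  max_lt (natCast_lt_aleph0.trans_le hκ) ((Finset.sup_lt_iff (aleph0_pos.trans_le hκ)).mpr
    fun i _ => levelCard_lt (hT i) ((isSuccLimit_ord hκ).add_one_lt hζ))

theorem branchingBound_monotoneOn (hT : ∀ i, IsRegularTree κ (T i)) (hκ : ℵ₀ ≤ κ) :
    MonotoneOn (branchingBound T) (Iio κ.ord) := by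
  intro a ha b hb hab
  refine max_le_max le_rfl (Finset.sup_mono_fun fun i _ => levelCard_monotoneOn (hT i) ?_ ?_ ?_)
  · exact (isSuccLimit_ord hκ).add_one_lt ha
  · exact (isSuccLimit_ord hκ).add_one_lt hb
  · exact add_le_add_left hab 1

end BranchingBound

theorem isClubIn_setOf_forall_lt {η : Ordinal.{0}} (hη : ℵ₀ < η.cof)
    {F : Ordinal.{0} → Ordinal.{0}} (hF : MonotoneOn F (Iio η)) (hFη : ∀ a < η, F a < η) :
    IsClubIn {β | β < η ∧ ∀ δ < β, F δ < β} η := by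
  refine ⟨fun β hβ => hβ.1, fun β hβ => ?_, fun s hs hne hsup => ⟨hsup, fun δ hδ => ?_⟩⟩
  · let g (γ : Ordinal.{0}) := F γ + 1
    have hg (γ) (hγ : γ < η) : g γ < η :=
      (Ordinal.one_lt_cof_iff.mp (one_lt_aleph0.trans hη)).add_one_lt (hFη γ hγ)
    have hlt : Ordinal.nfp g β < η := Ordinal.nfp_lt_ord hη hg hβ
    refine ⟨Ordinal.nfp g β, ⟨hlt, fun δ hδ => ?_⟩, Ordinal.le_nfp g β⟩
    obtain ⟨n, hn⟩ := Ordinal.lt_nfp_iff.mp hδ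
    have hn' : g^[n] β < η := (Ordinal.iterate_le_nfp g β n).trans_lt hlt
    calc F δ ≤ F (g^[n] β) := hF (hδ.trans hlt) hn' hn.le
      _ < g^[n + 1] β := by
        rw [Function.iterate_succ_apply']
        exact lt_add_one _
      _ ≤ Ordinal.nfp g β := Ordinal.iterate_le_nfp g β (n + 1)
  · have hbdd : BddAbove s := ⟨η, fun x hx => (hs hx).1.le⟩
    obtain ⟨γ, hγs, hδγ⟩ := (lt_csSup_iff hbdd hne).mp hδ
    exact ((hs hγs).2 δ hδγ).trans_le (le_csSup hbdd hγs)

theorem power_lt_of_forall_two_power_lt {α a b : Cardinal.{0}} (hα : ℵ₀ ≤ α)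
    (h2 : ∀ x < α, 2 ^ x < α) (ha : a < α) (hb : b < α) : a ^ b < α :=
  calc a ^ b ≤ (2 ^ a) ^ b := power_le_power_right (cantor a).le
    _ = 2 ^ (a * b) := power_mul.symm
    _ < α := h2 _ (mul_lt_of_lt hα ha hb)

theorem aleph0_lt_cof_and_two_power_lt {κ : Cardinal.{0}}
    (hκ : StronglyInaccessible κ ∨
      (Cardinal.aleph 1 ≤ Ordinal.cof κ.ord ∧
        ∀ β : Cardinal.{0}, β < κ →
          ∃ lam : Cardinal.{0}, β < lam ∧ lam < κ ∧ StronglyInaccessible lam)) :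
    ℵ₀ < κ.ord.cof ∧ ∀ x < κ, 2 ^ x < κ := by
  rcases hκ with ⟨hκ, hreg, h2⟩ | ⟨hcof, hlim⟩
  · exact ⟨by rwa [hreg.cof_ord], h2⟩
  · refine ⟨aleph0_lt_aleph_one.trans_le hcof, fun x hx => ?_⟩
    obtain ⟨lam, hxlam, hlamκ, -, -, h2⟩ := hlim x hx
    exact (h2 x hxlam).trans hlamκ

theorem exists_sdMatrix_of_sdhl {d : ℕ} {σ κ α : Cardinal.{0}} {T : Fin d → Set (SeqNode κ)}
    (hT : ∀ i, IsRegularTree κ (T i)) {c : (Fin d → SeqNode κ) → Ordinal.{0}}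
    (hc : ∀ x ∈ LevelProd T, c x < σ.ord) (hα : ℵ₀ ≤ α) (hακ : α.ord ≤ κ.ord)
    (hsdhl : SDHL d σ α) (hτ : ∀ ζ < α.ord, branchingBound T ζ < α)
    (h2 : ∀ x < α, 2 ^ x < α) :
    ∃ X : Fin d → Set (SeqNode κ), (∀ i, X i ⊆ T i) ∧ IsSDMatrix κ T X ∧ MonoOn c X := by
  have hκ : ℵ₀ ≤ κ := hα.trans (ord_le_ord.mp hακ)
  have hU : IsRegularTree α (branchingTree α (branchingBound T)) :=
    isRegularTree_branchingTree hα two_le_branchingBound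
      ((branchingBound_monotoneOn hT hκ).mono (Iio_subset_Iio hακ))
      fun ζ hζ => power_lt_of_forall_two_power_lt hα h2 (hτ ζ hζ) (lt_ord.mp hζ)
  choose D hD using fun i => (hT i).exists_isTreeCover
    (fun ζ hζ => mk_level_le_branchingBound hT i hζ) hα hακ hτ
  obtain ⟨X, hXU, hX, hXc⟩ := hsdhl _ (fun _ => hU) (fun x => c fun i => D i (x i))
    fun x ⟨γ, hx⟩ => hc _ ⟨γ, fun i => (hD i).mem_level (hx i)⟩
  exact ⟨fun i => D i '' X i, fun i => image_subset_iff.mpr fun x hx => (hD i).1 (hXU i hx),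
    hX.image_of_isTreeCover hD hακ, hXc.image_of_len_eq fun i u hu => (hD i).2.1 u (hXU i hu)⟩

theorem sdhl_reflects_general (κ : Cardinal.{0})
    (hκ : StronglyInaccessible κ ∨
      (Cardinal.aleph 1 ≤ Ordinal.cof κ.ord ∧
        ∀ β : Cardinal.{0}, β < κ →
          ∃ lam : Cardinal.{0}, β < lam ∧ lam < κ ∧ StronglyInaccessible lam))
    (d : ℕ) (σ : Cardinal.{0})
    (hS : IsStationaryIn (SDHLset d σ κ) κ.ord) :
    SDHL d σ κ := by
  obtain ⟨hcof, h2⟩ := aleph0_lt_cof_and_two_power_lt hκ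
  have hκ : ℵ₀ ≤ κ := hcof.le.trans ((Ordinal.cof_le_card _).trans (card_ord κ).le)
  intro T hT c hc
  let F (δ : Ordinal.{0}) := max (branchingBound T δ).ord ((2 : Cardinal.{0}) ^ δ.card).ord
  have hclub : IsClubIn {β | β < κ.ord ∧ ∀ δ < β, F δ < β} κ.ord := by
    refine isClubIn_setOf_forall_lt hcof (fun a ha b hb hab => ?_) fun a ha => ?_
    · exact max_le_max (ord_le_ord.mpr (branchingBound_monotoneOn hT hκ ha hb hab))
        (ord_le_ord.mpr (power_le_power_left two_ne_zero (Ordinal.card_le_card hab)))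
    · exact max_lt (ord_lt_ord.mpr (branchingBound_lt hT hκ ha))
        (ord_lt_ord.mpr (h2 _ (lt_ord.mp ha)))
  obtain ⟨α, ⟨hακ, hα, hαord, -, hsdhl⟩, -, hαF⟩ := hS _ hclub
  refine exists_sdMatrix_of_sdhl hT hc hα (hαord.trans_le hακ.le) hsdhl (fun ζ hζ => ?_)
    fun x hx => ?_
  · have h := (le_max_left _ _).trans_lt (hαF ζ (hαord ▸ hζ))
    rw [← hαord] at h
    exact ord_lt_ord.mp h
  · have h := (le_max_right _ _).trans_lt (hαF x.ord (hαord ▸ ord_lt_ord.mpr hx))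
    rw [← hαord, card_ord] at h
    exact ord_lt_ord.mp h

/-- If κ is strongly inaccessible, or has uncountable cofinality and is a
limit of strongly inaccessible cardinals, and SDHL(d,σ,α) holds for a stationary set of
α < κ, then SDHL(d,σ,κ) holds. -/
theorem sdhl_reflects (κ : Cardinal.{0})
    (hκ : StronglyInaccessible κ ∨
      (Cardinal.aleph 1 ≤ Ordinal.cof κ.ord ∧
        ∀ β : Cardinal.{0}, β < κ →
          ∃ lam : Cardinal.{0}, β < lam ∧ lam < κ ∧ StronglyInaccessible lam))
    (d : ℕ) (hd : 1 ≤ d) (σ : Cardinal.{0}) (hσ : 1 ≤ σ) (hσκ : σ < κ)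
    (hS : IsStationaryIn (SDHLset d σ κ) κ.ord) :
    SDHL d σ κ :=
  sdhl_reflects_general κ hκ d σ hS
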